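/- arXiv:1706.00669 — 4 statements merged into one kernel-verified Lean document; each statement's English description precedes it below -/
import Mathlib

section
/- The Bernstein operator B_n of order n has eigenvalues λ_{k,n} = n!/((n−k)! n^k) for k = 0, …, n, and these satisfy 1 = λ_{0,n} = λ_{1,n} > λ_{2,n} > ⋯ > λ_{n,n} = n!/n^n; in particular the second largest eigenvalue is λ_{2,n} = (n−1)/n. -/
/-!
Write `(a)_m = a (a-1) ⋯ (a-m+1)`. In the monomial basis `B_n` is upper triangular with diagonal
`λ_{0,n}, …, λ_{n,n}`: the monic polynomial `Q_m(x) = x (x - 1/n) ⋯ (x - (m-1)/n)` takes the value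
`(ν)_m / n^m` at the node `ν/n`, and `(ν)_m C(n,ν) = (n)_m C(n-m,ν-m)` together with
`∑_μ b_{n-m,μ} = 1` gives `B_n Q_m = ((n)_m / n^m) x^m = λ_{m,n} x^m`.
Since `λ_{k+1,n} = λ_{k,n} (n-k)/n`, the diagonal decreases strictly from `k = 1` on; for `k ≥ 2`
the entry `λ_{k,n}` thus differs from all earlier ones, and `∏_{j<k} (B_n - λ_{j,n}) x^k` is an
eigenvector of degree `k`. For `k ≤ 1` the eigenvectors are `1` and `x`.
-/

noncomputable section

/-- The Bernstein operator of order `n`: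
`B_n f (x) = ∑_{k=0}^n f(k/n) C(n,k) x^k (1-x)^{n-k}`. -/
def bernsteinOp (n : ℕ) (f : ℝ → ℝ) (x : ℝ) : ℝ :=
  ∑ k ∈ Finset.range (n + 1), f ((k : ℝ) / n) * (n.choose k : ℝ) * x ^ k * (1 - x) ^ (n - k)

/-- The numbers `λ_{k,n} = n! / ((n-k)! n^k)`. -/
def bernsteinEigenvalue (n k : ℕ) : ℝ :=
  (n.factorial : ℝ) / ((n - k).factorial * (n : ℝ) ^ k)

open Polynomial Finset

section Triangular

variable {K : Type*} [Field K] {T : Module.End K K[X]}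

/-- `T` is upper triangular in the monomial basis of the polynomials of degree `≤ N`, with
diagonal entries `d 0, …, d N`. -/
def IsTriangular (T : Module.End K K[X]) (d : ℕ → K) (N : ℕ) : Prop :=
  ∀ m ≤ N, ∀ p ∈ degreeLT K (m + 1), T p - d m • p ∈ degreeLT K m

theorem aeval_X_sub_C_apply (c : K) (p : K[X]) : aeval T (X - C c) p = T p - c • p := by
  simp [Module.algebraMap_end_apply]

theorem apply_mem_degreeLT_and_coeff_of_sub_smul_mem {c : K} {m : ℕ}
    (hT : ∀ p ∈ degreeLT K (m + 1), T p - c • p ∈ degreeLT K m) {p : K[X]}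
    (hp : p ∈ degreeLT K (m + 1)) : T p ∈ degreeLT K (m + 1) ∧ (T p).coeff m = c * p.coeff m := by
  have hsub := hT p hp
  constructor
  · simpa using add_mem (degreeLT_mono m.le_succ hsub) (Submodule.smul_mem _ c hp)
  · have hcoeff := coeff_eq_zero_of_degree_lt (mem_degreeLT.mp hsub)
    rwa [coeff_sub, coeff_smul, smul_eq_mul, sub_eq_zero] at hcoeff

theorem aeval_apply_mem_degreeLT_and_coeff_of_sub_smul_mem {c : K} {m : ℕ}
    (hT : ∀ p ∈ degreeLT K (m + 1), T p - c • p ∈ degreeLT K m) (f : K[X]) {p : K[X]}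
    (hp : p ∈ degreeLT K (m + 1)) :
    aeval T f p ∈ degreeLT K (m + 1) ∧ (aeval T f p).coeff m = f.eval c * p.coeff m := by
  induction f using Polynomial.induction_on generalizing p with
  | C a => simpa [Module.algebraMap_end_apply] using Submodule.smul_mem _ a hp
  | add f g hf hg =>
    obtain ⟨hf_mem, hf_coeff⟩ := hf hp
    obtain ⟨hg_mem, hg_coeff⟩ := hg hp
    simp only [map_add, LinearMap.add_apply, coeff_add, eval_add, hf_coeff, hg_coeff]
    exact ⟨add_mem hf_mem hg_mem, by ring⟩
  | monomial k a ih =>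
    obtain ⟨hTp_mem, hTp_coeff⟩ := apply_mem_degreeLT_and_coeff_of_sub_smul_mem hT hp
    obtain ⟨h_mem, h_coeff⟩ := ih hTp_mem
    rw [pow_succ, ← mul_assoc, map_mul, aeval_X, Module.End.mul_apply]
    refine ⟨h_mem, ?_⟩
    rw [h_coeff, hTp_coeff]
    simp only [eval_mul, eval_C, eval_pow, eval_X]
    ring

namespace IsTriangular

variable {d : ℕ → K} {N : ℕ}

theorem aeval_prod_apply_eq_zero (hT : IsTriangular T d N) {k : ℕ} (hk : k ≤ N + 1) {p : K[X]}
    (hp : p ∈ degreeLT K k) : aeval T (∏ j ∈ range k, (X - C (d j))) p = 0 := by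
  induction k generalizing p with
  | zero => simpa [mem_degreeLT] using hp
  | succ k ih =>
    rw [prod_range_succ, map_mul, Module.End.mul_apply, aeval_X_sub_C_apply]
    exact ih (by omega) (hT k (by omega) p hp)

theorem exists_eigenvector (hT : IsTriangular T d N) {k : ℕ} (hk : k ≤ N)
    (hd : ∀ j < k, d j ≠ d k) : ∃ q : K[X], q.degree = k ∧ T q = d k • q := by
  set P := ∏ j ∈ range k, (X - C (d j))
  have hXk : (X ^ k : K[X]) ∈ degreeLT K (k + 1) := by
    rw [mem_degreeLT, degree_X_pow]; exact_mod_cast k.lt_succ_self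
  obtain ⟨hq_mem, hq_coeff⟩ :=
    aeval_apply_mem_degreeLT_and_coeff_of_sub_smul_mem (hT k hk) P hXk
  refine ⟨aeval T P (X ^ k), degree_eq_of_le_of_coeff_ne_zero ?_ ?_, ?_⟩
  · rwa [degreeLT_succ_eq_degreeLE, mem_degreeLE] at hq_mem
  · rw [hq_coeff, coeff_X_pow_self, mul_one, eval_prod]
    exact prod_ne_zero_iff.mpr fun j hj => by
      simpa [sub_eq_zero] using (hd j (mem_range.mp hj)).symm
  · rw [← sub_eq_zero, ← aeval_X_sub_C_apply, ← Module.End.mul_apply, ← map_mul, mul_comm,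
      map_mul, Module.End.mul_apply, aeval_X_sub_C_apply]
    exact hT.aeval_prod_apply_eq_zero (by omega) (hT k hk _ hXk)

end IsTriangular

theorem isTriangular_of_sequence {d : ℕ → K} {N : ℕ} (S : Sequence K)
    (hS : ∀ m ≤ N, T (S m) - d m • S m ∈ degreeLT K m) : IsTriangular T d N := by
  intro m hm p hp
  suffices degreeLT K (m + 1) ≤ (degreeLT K m).comap (T - d m • 1) by simpa using this hp
  rw [← S.span_degreeLT fun i _ => (leadingCoeff_ne_zero.mpr (S.ne_zero i)).isUnit,
    Submodule.span_le]
  rintro _ ⟨j, hj, rfl⟩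
  simp only [SetLike.mem_coe, Submodule.mem_comap, LinearMap.sub_apply, LinearMap.smul_apply,
    Module.End.one_apply]
  rcases (Nat.lt_succ_iff.mp hj).lt_or_eq with hjm | rfl
  · have hSj : S j ∈ degreeLT K m := by
      rw [mem_degreeLT, S.degree_eq]; exact_mod_cast hjm
    have hsplit : T (S j) - d m • S j = (T (S j) - d j • S j) + (d j - d m) • S j := by module
    rw [hsplit]
    exact add_mem (degreeLT_mono hjm.le (hS j (by omega))) (Submodule.smul_mem _ _ hSj)
  · exact hS _ hm

end Triangular

namespace bernsteinPolynomial

variable {R : Type*} [CommRing R]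

theorem descFactorial_smul_add (n m μ : ℕ) :
    ((m + μ).descFactorial m : R) • bernsteinPolynomial R n (m + μ) =
      (n.descFactorial m : R) • (X ^ m * bernsteinPolynomial R (n - m) μ) := by
  have hcoeff : (m + μ).descFactorial m * n.choose (m + μ) =
      n.descFactorial m * (n - m).choose μ := by
    rw [Nat.descFactorial_eq_factorial_mul_choose, Nat.descFactorial_eq_factorial_mul_choose,
      mul_assoc, mul_comm ((m + μ).choose m), Nat.choose_mul (Nat.le_add_right m μ),
      Nat.add_sub_cancel_left, mul_assoc]
  simp only [bernsteinPolynomial, Nat.sub_sub, Algebra.smul_def, map_natCast]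
  have hcoeff' := congrArg (Nat.cast : ℕ → R[X]) hcoeff
  push_cast at hcoeff'
  linear_combination (X ^ (m + μ) * (1 - X) ^ (n - (m + μ)) : R[X]) * hcoeff'

theorem sum_descFactorial_smul (n m : ℕ) :
    ∑ ν ∈ range (n + 1), (ν.descFactorial m : R) • bernsteinPolynomial R n ν =
      (n.descFactorial m : R) • X ^ m := by
  rcases le_or_gt m n with hm | hm
  · obtain ⟨l, rfl⟩ := Nat.exists_eq_add_of_le hm
    have hlow : ∑ ν ∈ range m, (ν.descFactorial m : R) • bernsteinPolynomial R (m + l) ν = 0 :=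
      sum_eq_zero fun ν hν => by simp [Nat.descFactorial_eq_zero_iff_lt.mpr (mem_range.mp hν)]
    rw [show m + l + 1 = m + (l + 1) by ring, sum_range_add, hlow, zero_add]
    simp only [descFactorial_smul_add, Nat.add_sub_cancel_left]
    rw [← smul_sum, ← mul_sum, bernsteinPolynomial.sum, mul_one]
  · rw [Nat.descFactorial_eq_zero_iff_lt.mpr hm, Nat.cast_zero, zero_smul]
    refine sum_eq_zero fun ν hν => ?_
    have hν : ν < m := by have := mem_range.mp hν; omega
    simp [Nat.descFactorial_eq_zero_iff_lt.mpr hν]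

end bernsteinPolynomial

def scaledFallingFactorial (n m : ℕ) : ℝ[X] :=
  ∏ i ∈ range m, (X - C ((i : ℝ) / n))

theorem monic_scaledFallingFactorial (n m : ℕ) : (scaledFallingFactorial n m).Monic :=
  monic_prod_X_sub_C _ _

theorem degree_scaledFallingFactorial (n m : ℕ) : (scaledFallingFactorial n m).degree = m := by
  rw [degree_eq_natDegree (monic_scaledFallingFactorial n m).ne_zero, scaledFallingFactorial,
    natDegree_prod_of_monic _ _ fun i _ => monic_X_sub_C _]
  simp

theorem eval_scaledFallingFactorial (n m ν : ℕ) :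
    (scaledFallingFactorial n m).eval ((ν : ℝ) / n) = ν.descFactorial m / (n : ℝ) ^ m := by
  simp only [scaledFallingFactorial, eval_prod, eval_sub, eval_X, eval_C, ← sub_div]
  rw [prod_div_distrib, prod_const, card_range, ← descPochhammer_eval_eq_prod_range,
    descPochhammer_eval_eq_descFactorial]

def bernsteinOperator (n : ℕ) : Module.End ℝ ℝ[X] where
  toFun p := ∑ ν ∈ range (n + 1), p.eval ((ν : ℝ) / n) • bernsteinPolynomial ℝ n ν
  map_add' p q := by simp only [eval_add, add_smul, sum_add_distrib]
  map_smul' a p := by simp only [eval_smul, smul_eq_mul, mul_smul, smul_sum, RingHom.id_apply]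

theorem bernsteinOperator_apply (n : ℕ) (p : ℝ[X]) :
    bernsteinOperator n p = ∑ ν ∈ range (n + 1), p.eval ((ν : ℝ) / n) • bernsteinPolynomial ℝ n ν :=
  rfl

theorem eval_bernsteinOperator (n : ℕ) (p : ℝ[X]) (x : ℝ) :
    (bernsteinOperator n p).eval x = bernsteinOp n (fun y => p.eval y) x := by
  simp only [bernsteinOperator_apply, eval_finsetSum, eval_smul, bernsteinPolynomial, eval_mul,
    eval_pow, eval_sub, eval_one, eval_X, eval_natCast, smul_eq_mul, bernsteinOp, mul_assoc]

theorem bernsteinEigenvalue_eq_descFactorial_div {n k : ℕ} (hk : k ≤ n) :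
    bernsteinEigenvalue n k = n.descFactorial k / (n : ℝ) ^ k := by
  rw [bernsteinEigenvalue, ← Nat.factorial_mul_descFactorial hk, Nat.cast_mul,
    mul_div_mul_left _ _ (by positivity)]

theorem bernsteinOperator_scaledFallingFactorial {n m : ℕ} (hm : m ≤ n) :
    bernsteinOperator n (scaledFallingFactorial n m) = bernsteinEigenvalue n m • X ^ m := by
  simp_rw [bernsteinOperator_apply, eval_scaledFallingFactorial, div_eq_inv_mul, mul_smul]
  rw [← smul_sum, bernsteinPolynomial.sum_descFactorial_smul, smul_smul,
    bernsteinEigenvalue_eq_descFactorial_div hm, div_eq_inv_mul]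

theorem isTriangular_bernsteinOperator (n : ℕ) :
    IsTriangular (bernsteinOperator n) (bernsteinEigenvalue n) n := by
  refine isTriangular_of_sequence ⟨scaledFallingFactorial n, degree_scaledFallingFactorial n⟩
    fun m hm => ?_
  change bernsteinOperator n (scaledFallingFactorial n m) - _ • scaledFallingFactorial n m ∈ _
  rw [bernsteinOperator_scaledFallingFactorial hm, ← smul_sub]
  refine Submodule.smul_mem _ _ (mem_degreeLT.mpr ?_)
  have hlt := degree_sub_lt_left (p := (X ^ m : ℝ[X])) (q := scaledFallingFactorial n m)
    (by rw [degree_X_pow, degree_scaledFallingFactorial]) (pow_ne_zero m X_ne_zero)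
    (by rw [leadingCoeff_X_pow, (monic_scaledFallingFactorial n m).leadingCoeff])
  rwa [degree_X_pow] at hlt

theorem bernsteinEigenvalue_zero (n : ℕ) : bernsteinEigenvalue n 0 = 1 := by
  simp [bernsteinEigenvalue, Nat.factorial_ne_zero]

theorem bernsteinEigenvalue_self (n : ℕ) :
    bernsteinEigenvalue n n = (n.factorial : ℝ) / (n : ℝ) ^ n := by
  simp [bernsteinEigenvalue]

theorem bernsteinEigenvalue_succ {n k : ℕ} (hk : k < n) :
    bernsteinEigenvalue n (k + 1) = bernsteinEigenvalue n k * ((n - k) / n) := by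
  have hn : (n : ℝ) ≠ 0 := by exact_mod_cast (k.zero_le.trans_lt hk).ne'
  rw [bernsteinEigenvalue_eq_descFactorial_div hk, bernsteinEigenvalue_eq_descFactorial_div hk.le,
    Nat.descFactorial_succ, Nat.cast_mul, Nat.cast_sub hk.le, pow_succ]
  field_simp

theorem bernsteinEigenvalue_one {n : ℕ} (hn : 1 ≤ n) : bernsteinEigenvalue n 1 = 1 := by
  have hn' : (n : ℝ) ≠ 0 := by positivity
  simp [bernsteinEigenvalue_succ hn, bernsteinEigenvalue_zero, hn']

theorem bernsteinEigenvalue_two {n : ℕ} (hn : 2 ≤ n) :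
    bernsteinEigenvalue n 2 = ((n : ℝ) - 1) / n := by
  rw [bernsteinEigenvalue_succ hn, bernsteinEigenvalue_one (by omega), one_mul, Nat.cast_one]

theorem bernsteinEigenvalue_succ_lt {n k : ℕ} (hk : 1 ≤ k) (hkn : k < n) :
    bernsteinEigenvalue n (k + 1) < bernsteinEigenvalue n k := by
  have hn : (0 : ℝ) < n := by exact_mod_cast k.zero_le.trans_lt hkn
  have hk' : (1 : ℝ) ≤ k := by exact_mod_cast hk
  rw [bernsteinEigenvalue_succ hkn]
  refine mul_lt_of_lt_one_right (by unfold bernsteinEigenvalue; positivity) ?_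
  rw [div_lt_one hn]
  linarith

theorem strictAntiOn_bernsteinEigenvalue (n : ℕ) :
    StrictAntiOn (bernsteinEigenvalue n) (Set.Icc 1 n) :=
  strictAntiOn_of_succ_lt Set.ordConnected_Icc fun _ _ hk hk' =>
    bernsteinEigenvalue_succ_lt hk.1 (Order.succ_le_iff.mp hk'.2)

theorem bernsteinEigenvalue_lt_of_lt {n j k : ℕ} (hjk : j < k) (hk : 1 < k) (hkn : k ≤ n) :
    bernsteinEigenvalue n k < bernsteinEigenvalue n j := by
  have hanti := strictAntiOn_bernsteinEigenvalue n
  rcases Nat.eq_zero_or_pos j with rfl | hj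
  · rw [bernsteinEigenvalue_zero, ← bernsteinEigenvalue_one (by omega : 1 ≤ n)]
    exact hanti ⟨le_rfl, by omega⟩ ⟨hk.le, hkn⟩ hk
  · exact hanti ⟨hj, by omega⟩ ⟨by omega, hkn⟩ hjk

theorem exists_bernsteinOperator_eigenvector {n k : ℕ} (hk : k ≤ n) :
    ∃ q : ℝ[X], q.degree = k ∧ bernsteinOperator n q = bernsteinEigenvalue n k • q := by
  rcases Nat.lt_or_ge k 2 with hk2 | hk2
  · refine ⟨scaledFallingFactorial n k, degree_scaledFallingFactorial n k, ?_⟩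
    rw [bernsteinOperator_scaledFallingFactorial hk]
    interval_cases k <;> simp [scaledFallingFactorial]
  · exact (isTriangular_bernsteinOperator n).exists_eigenvector hk fun j hj =>
      (bernsteinEigenvalue_lt_of_lt hj hk2 hk).ne'

/-- **Eigenvalues of the Bernstein operator** (Calugareanu).
The Bernstein operator `B_n` (restricted to polynomials of degree ≤ n) has eigenvalues
`λ_{k,n} = n!/((n−k)! n^k)`, `k = 0, …, n`, each with a polynomial eigenfunction of degree `k`,
and `1 = λ_{0,n} = λ_{1,n} > λ_{2,n} > ⋯ > λ_{n,n} = n!/n^n`; in particular the second largest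
eigenvalue is `λ_{2,n} = (n−1)/n`. -/
theorem bernstein_eigenvalues (n : ℕ) (hn : 2 ≤ n) :
    (∀ k ≤ n, ∃ q : Polynomial ℝ, q ≠ 0 ∧ q.natDegree = k ∧
        ∀ x : ℝ, bernsteinOp n (fun y => q.eval y) x = bernsteinEigenvalue n k * q.eval x) ∧
      bernsteinEigenvalue n 0 = 1 ∧
      bernsteinEigenvalue n 1 = 1 ∧
      (∀ k, 1 ≤ k → k < n → bernsteinEigenvalue n (k + 1) < bernsteinEigenvalue n k) ∧
      bernsteinEigenvalue n n = (n.factorial : ℝ) / (n : ℝ) ^ n ∧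
      bernsteinEigenvalue n 2 = ((n : ℝ) - 1) / n := by
  refine ⟨fun k hk => ?_, bernsteinEigenvalue_zero n, bernsteinEigenvalue_one (by omega),
    fun _ => bernsteinEigenvalue_succ_lt, bernsteinEigenvalue_self n, bernsteinEigenvalue_two hn⟩
  obtain ⟨q, hq_deg, hq_eig⟩ := exists_bernsteinOperator_eigenvector hk
  refine ⟨q, by rintro rfl; simp at hq_deg, natDegree_eq_of_degree_eq_some hq_deg, fun x => ?_⟩
  rw [← eval_bernsteinOperator, hq_eig, eval_smul, smul_eq_mul]

end
end

section
/- For every polynomial p in the range of the Bernstein operator B_n (i.e., of degree at most n) and r < n, the r-th derivative satisfies ‖D^r (B_n f)‖_∞ ≤ (2^r n!/(n−r)!) ‖f‖_∞ for all f ∈ C([0,1]); thus the operator norm of D^r restricted to im(B_n) in the sup norm is at most 2^r n!/(n−r)!. -/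
/-!
Write `B_n f = ∑ₖ cₖ bₙₖ` in the Bernstein basis, with `cₖ = f (k/n)`. The derivative formula
`bₙₖ' = n (bₙ₋₁,ₖ₋₁ - bₙ₋₁,ₖ)` and Abel summation give `D (∑ₖ cₖ bₙₖ) = n ∑ₖ (Δc)ₖ bₙ₋₁,ₖ`, so
`D^r B_n f = n!/(n-r)! ∑ₖ (Δ^r c)ₖ bₙ₋ᵣ,ₖ`. On `[0,1]` the basis is a nonnegative partition of
unity, so this sum is bounded by `maxₖ |(Δ^r c)ₖ| ≤ 2^r ‖f‖_∞`.
-/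

noncomputable section

open Polynomial Finset fwdDiff

def bernsteinCombination (R : Type*) [CommRing R] (n : ℕ) (c : ℕ → R) : R[X] :=
  ∑ k ∈ range (n + 1), c k • bernsteinPolynomial R n k

section bernsteinCombination

variable {R : Type*} [CommRing R]

theorem derivative_bernsteinCombination (n : ℕ) (c : ℕ → R) :
    derivative (bernsteinCombination R n c) = n • bernsteinCombination R (n - 1) (Δ_[1] c) := by
  cases n with
  | zero => simp [bernsteinCombination, bernsteinPolynomial]
  | succ m =>
    have reindex : ∑ k ∈ range (m + 1), c (k + 1) • bernsteinPolynomial R m (k + 1) +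
        c 0 • bernsteinPolynomial R m 0 = ∑ k ∈ range (m + 1), c k • bernsteinPolynomial R m k := by
      rw [← sum_range_succ' (fun k => c k • bernsteinPolynomial R m k), sum_range_succ,
        bernsteinPolynomial.eq_zero_of_lt R (Nat.lt_succ_self m), smul_zero, add_zero]
    simp only [bernsteinCombination, derivative_sum, derivative_smul, Nat.add_sub_cancel]
    rw [sum_range_succ']
    simp only [bernsteinPolynomial.derivative_succ_aux, bernsteinPolynomial.derivative_zero,
      fwdDiff, sub_smul, sum_sub_distrib, smul_sub, mul_sub, ← mul_smul_comm, ← mul_sum, neg_mul,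
      smul_neg, Nat.add_sub_cancel, nsmul_eq_mul, smul_sum] at reindex ⊢
    push_cast
    linear_combination -(↑m + 1 : R[X]) * reindex

theorem iterate_derivative_bernsteinCombination (r n : ℕ) (c : ℕ → R) :
    derivative^[r] (bernsteinCombination R n c) =
      n.descFactorial r • bernsteinCombination R (n - r) ((Δ_[1])^[r] c) := by
  induction r with
  | zero => simp
  | succ r ih =>
    rw [Function.iterate_succ_apply', ih, map_nsmul, derivative_bernsteinCombination, smul_smul,
      Nat.descFactorial_succ, Nat.sub_sub, Function.iterate_succ_apply', mul_comm]

end bernsteinCombination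

theorem abs_eval_bernsteinCombination_le {n : ℕ} {c : ℕ → ℝ} {C : ℝ}
    (hc : ∀ k ≤ n, |c k| ≤ C) {x : ℝ} (hx : x ∈ Set.Icc (0 : ℝ) 1) :
    |(bernsteinCombination ℝ n c).eval x| ≤ C := by
  have basis_nonneg (k : ℕ) : 0 ≤ (bernsteinPolynomial ℝ n k).eval x := by
    simp only [bernsteinPolynomial, eval_mul, eval_pow, eval_sub, eval_one, eval_X, eval_natCast]
    have : 0 ≤ 1 - x := sub_nonneg.mpr hx.2
    have := hx.1
    positivity
  calc |(bernsteinCombination ℝ n c).eval x|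
      ≤ ∑ k ∈ range (n + 1), |c k| * (bernsteinPolynomial ℝ n k).eval x := by
        simp only [bernsteinCombination, eval_finsetSum, eval_smul, smul_eq_mul]
        refine (abs_sum_le_sum_abs _ _).trans_eq (sum_congr rfl fun k _ => ?_)
        rw [abs_mul, abs_of_nonneg (basis_nonneg k)]
    _ ≤ ∑ k ∈ range (n + 1), C * (bernsteinPolynomial ℝ n k).eval x :=
        sum_le_sum fun k hk =>
          mul_le_mul_of_nonneg_right (hc k (Nat.lt_succ_iff.mp (mem_range.mp hk))) (basis_nonneg k)
    _ = C := by rw [← mul_sum, ← eval_finsetSum, bernsteinPolynomial.sum, eval_one, mul_one]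

theorem norm_fwdDiff_iter_le {E : Type*} [SeminormedAddCommGroup E] {n : ℕ} {c : ℕ → E} {C : ℝ}
    (hc : ∀ k ≤ n, ‖c k‖ ≤ C) (r : ℕ) : ∀ k, k + r ≤ n → ‖(Δ_[1])^[r] c k‖ ≤ 2 ^ r * C := by
  induction r with
  | zero => simpa using hc
  | succ r ih =>
    intro k hk
    rw [Function.iterate_succ_apply', fwdDiff]
    calc ‖(Δ_[1])^[r] c (k + 1) - (Δ_[1])^[r] c k‖
        ≤ ‖(Δ_[1])^[r] c (k + 1)‖ + ‖(Δ_[1])^[r] c k‖ := norm_sub_le _ _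
      _ ≤ 2 ^ r * C + 2 ^ r * C := add_le_add (ih _ (by omega)) (ih _ (by omega))
      _ = 2 ^ (r + 1) * C := by ring

theorem Polynomial.iteratedDeriv_eval {𝕜 : Type*} [NontriviallyNormedField 𝕜] (p : 𝕜[X])
    (r : ℕ) : iteratedDeriv r (fun x => p.eval x) = fun x => (derivative^[r] p).eval x := by
  induction r with
  | zero => simp
  | succ r ih =>
    ext x
    rw [iteratedDeriv_succ, ih, Polynomial.deriv, Function.iterate_succ_apply']

theorem bernsteinOp_eq_eval (n : ℕ) (f : ℝ → ℝ) :
    bernsteinOp n f = fun x => (bernsteinCombination ℝ n (fun k => f (k / n))).eval x := by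
  ext x
  simp only [bernsteinOp, bernsteinCombination, bernsteinPolynomial, eval_finsetSum, eval_smul,
    eval_mul, eval_pow, eval_sub, eval_one, eval_X, eval_natCast, smul_eq_mul, mul_assoc]

theorem bernstein_deriv_bound_general (n r : ℕ) (hr : r < n) (f : ℝ → ℝ)
    (C : ℝ) (hC : ∀ y ∈ Set.Icc (0 : ℝ) 1, |f y| ≤ C)
    (x : ℝ) (hx : x ∈ Set.Icc (0 : ℝ) 1) :
    |iteratedDeriv r (bernsteinOp n f) x| ≤
      2 ^ r * ((n.factorial : ℝ) / ((n - r).factorial : ℝ)) * C := by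
  set c : ℕ → ℝ := fun k => f (k / n)
  have hc : ∀ k ≤ n, ‖c k‖ ≤ C := fun k hk =>
    hC _ ⟨by positivity, div_le_one_of_le₀ (by exact_mod_cast hk) n.cast_nonneg⟩
  have hΔc : ∀ k ≤ n - r, |(Δ_[1])^[r] c k| ≤ 2 ^ r * C := fun k hk =>
    norm_fwdDiff_iter_le hc r k (by omega)
  have hdesc : (n.descFactorial r : ℝ) = n.factorial / (n - r).factorial := by
    rw [eq_div_iff (by positivity), mul_comm, ← Nat.cast_mul,
      Nat.factorial_mul_descFactorial hr.le]
  rw [bernsteinOp_eq_eval, Polynomial.iteratedDeriv_eval, iterate_derivative_bernsteinCombination]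
  beta_reduce
  rw [eval_smul, nsmul_eq_mul, abs_mul, Nat.abs_cast]
  calc (n.descFactorial r : ℝ) * |(bernsteinCombination ℝ (n - r) ((Δ_[1])^[r] c)).eval x|
      ≤ n.descFactorial r * (2 ^ r * C) :=
        mul_le_mul_of_nonneg_left (abs_eval_bernsteinCombination_le hΔc hx) (by positivity)
    _ = 2 ^ r * (n.factorial / (n - r).factorial) * C := by rw [hdesc]; ring

/-- **Bound on derivatives of Bernstein polynomials.**
For `r < n`, `f ∈ C([0,1])` with `|f| ≤ C` on `[0,1]`, and every `x ∈ [0,1]`: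
`|D^r (B_n f)(x)| ≤ 2^r (n!/(n−r)!) C`; thus the operator norm of `D^r` restricted to
`im B_n` in the sup norm is at most `2^r n!/(n−r)!`. -/
theorem bernstein_deriv_bound (n r : ℕ) (hr : r < n) (f : ℝ → ℝ) (hf : Continuous f)
    (C : ℝ) (hC : ∀ y ∈ Set.Icc (0 : ℝ) 1, |f y| ≤ C)
    (x : ℝ) (hx : x ∈ Set.Icc (0 : ℝ) 1) :
    |iteratedDeriv r (bernsteinOp n f) x| ≤
      2 ^ r * ((n.factorial : ℝ) / ((n - r).factorial : ℝ)) * C :=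
  bernstein_deriv_bound_general n r hr f C hC x hx

end
end

section
/- For all f ∈ C([0,1]) and all t > 0: ω_2(f, t) ≤ 4(1 + n^3 t^2) ‖B_n f − f‖_∞; in particular, (1/8) ω_2(f, n^{−3/2}) ≤ ‖B_n f − f‖_∞. -/
/-
Write `e = B_n f − f` and `D = ‖e‖_∞`. A second difference of `f` with step `h` is the second
difference of the polynomial `B_n f`, at most `h² ‖(B_n f)''‖_∞`, minus that of `e`, at most `4D`.
So everything rests on the Bernstein-type inequality `‖(B_n f)''‖_∞ ≤ 4 n³ D`. It comes from a
self-improving estimate: `(B_n f)'' = n (n-1) ∑ₖ Δ²_{1/n} f(k/n) b_{n-2,k}`, and each grid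
second difference `Δ²_{1/n} f(k/n)` is, by the first remark with `h = 1/n`, at most
`‖(B_n f)''‖_∞ / n² + 4D`; since `n (n-1) / n² < 1` this can be solved for `‖(B_n f)''‖_∞`.
-/

noncomputable section

/-- The sup norm of `g` on `[0,1]`. -/
def supNorm (g : ℝ → ℝ) : ℝ :=
  sSup ((fun x => |g x|) '' Set.Icc (0 : ℝ) 1)

/-- The second modulus of smoothness of `f` on `[0,1]` in the sup norm. -/
def omega2 (f : ℝ → ℝ) (t : ℝ) : ℝ :=
  sSup {v : ℝ | ∃ x h : ℝ, 0 < h ∧ h ≤ t ∧ 0 ≤ x ∧ x + 2 * h ≤ 1 ∧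
    v = |f (x + 2 * h) - 2 * f (x + h) + f x|}

open Set fwdDiff
open scoped Polynomial
open Polynomial (derivative)

theorem fwdDiff_iter_two_apply {M G : Type*} [AddCommMonoid M] [AddCommGroup G] (g : M → G)
    (h x : M) : (Δ_[h])^[2] g x = g (x + 2 • h) - 2 • g (x + h) + g x := by
  simp only [Function.iterate_succ, Function.iterate_zero, Function.comp_apply, id, fwdDiff,
    two_nsmul, add_assoc]
  abel

theorem fwdDiff_iter_two_comp_div (g : ℝ → ℝ) (N : ℝ) (k : ℕ) :
    (Δ_[1])^[2] (fun j : ℕ => g (j / N)) k = (Δ_[1 / N])^[2] g (k / N) := by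
  simp only [fwdDiff_iter_two_apply, smul_eq_mul, nsmul_eq_mul]
  push_cast
  ring_nf

section SecondDifference

variable {x h : ℝ}

theorem abs_fwdDiff_iter_two_le_of_abs_le {u : ℝ → ℝ} {D : ℝ} (hh : 0 ≤ h)
    (hu : ∀ y ∈ Icc x (x + 2 * h), |u y| ≤ D) : |(Δ_[h])^[2] u x| ≤ 4 * D := by
  have h0 := hu x ⟨le_rfl, by linarith⟩
  have h1 := hu (x + h) ⟨by linarith, by linarith⟩
  have h2 := hu (x + 2 * h) ⟨by linarith, le_rfl⟩
  rw [fwdDiff_iter_two_apply, nsmul_eq_mul, nsmul_eq_mul, Nat.cast_ofNat, sub_eq_add_neg]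
  calc |u (x + 2 * h) + -(2 * u (x + h)) + u x|
      ≤ |u (x + 2 * h)| + |-(2 * u (x + h))| + |u x| := abs_add_three _ _ _
    _ ≤ 4 * D := by rw [abs_neg, abs_mul, abs_two]; linarith

theorem abs_fwdDiff_iter_two_le_of_abs_secondDeriv_le {g g' g'' : ℝ → ℝ} {M : ℝ} (hh : 0 ≤ h)
    (hg : ∀ y ∈ Icc x (x + 2 * h), HasDerivAt g (g' y) y)
    (hg' : ∀ y ∈ Icc x (x + 2 * h), HasDerivAt g' (g'' y) y)
    (hM : ∀ y ∈ Icc x (x + 2 * h), |g'' y| ≤ M) :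
    |(Δ_[h])^[2] g x| ≤ M * h ^ 2 := by
  have hsub : Icc x (x + h) ⊆ Icc x (x + 2 * h) := Icc_subset_Icc_right (by linarith)
  have hshift : ∀ y ∈ Icc x (x + h), y + h ∈ Icc x (x + 2 * h) := fun y hy =>
    ⟨by linarith [hy.1], by linarith [hy.2]⟩
  have hg'_lip : ∀ y ∈ Icc x (x + h), |g' (y + h) - g' y| ≤ M * h := fun y hy => by
    simpa [abs_of_nonneg hh] using
      (convex_Icc x (x + 2 * h)).norm_image_sub_le_of_norm_hasDerivWithin_le
        (fun z hz => (hg' z hz).hasDerivWithinAt) hM (hsub hy) (hshift y hy)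
  have hΔg : ∀ y ∈ Icc x (x + h),
      HasDerivWithinAt (Δ_[h] g) (g' (y + h) - g' y) (Icc x (x + h)) y := fun y hy =>
    (((hg _ (hshift y hy)).comp_add_const y h).sub (hg y (hsub hy))).hasDerivWithinAt
  have := (convex_Icc x (x + h)).norm_image_sub_le_of_norm_hasDerivWithin_le hΔg hg'_lip
    (left_mem_Icc.2 (by linarith)) (right_mem_Icc.2 (by linarith))
  simp only [Real.norm_eq_abs, add_sub_cancel_left, abs_of_nonneg hh] at this
  simpa [Function.iterate_succ, fwdDiff, sq, mul_assoc] using this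

theorem abs_fwdDiff_iter_two_le_of_polynomial_approx {f : ℝ → ℝ} {P : ℝ[X]} {M D : ℝ}
    (hh : 0 ≤ h) (hM : ∀ y ∈ Icc x (x + 2 * h), |(derivative^[2] P).eval y| ≤ M)
    (hD : ∀ y ∈ Icc x (x + 2 * h), |f y - P.eval y| ≤ D) :
    |(Δ_[h])^[2] f x| ≤ M * h ^ 2 + 4 * D := by
  have hP : |(Δ_[h])^[2] (fun y => P.eval y) x| ≤ M * h ^ 2 :=
    abs_fwdDiff_iter_two_le_of_abs_secondDeriv_le hh (fun y _ => P.hasDerivAt y)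
      (fun y _ => (derivative P).hasDerivAt y) hM
  have he : |(Δ_[h])^[2] (f - fun y => P.eval y) x| ≤ 4 * D :=
    abs_fwdDiff_iter_two_le_of_abs_le hh hD
  calc |(Δ_[h])^[2] f x|
      = |(Δ_[h])^[2] (fun y => P.eval y) x + (Δ_[h])^[2] (f - fun y => P.eval y) x| := by
        rw [← Pi.add_apply, ← fwdDiff_iter_add, add_sub_cancel]
    _ ≤ M * h ^ 2 + 4 * D := (abs_add_le _ _).trans (add_le_add hP he)

end SecondDifference

section BernsteinSum

def bernsteinSum {R : Type*} [CommRing R] (n : ℕ) (c : ℕ → R) : R[X] :=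
  ∑ k ∈ Finset.range (n + 1), c k • bernsteinPolynomial R n k

theorem derivative_bernsteinSum_succ {R : Type*} [CommRing R] (n : ℕ) (c : ℕ → R) :
    derivative (bernsteinSum (n + 1) c) = ((n : R) + 1) • bernsteinSum n (Δ_[1] c) := by
  set b := bernsteinPolynomial R n
  have hb : ∀ k, derivative (bernsteinPolynomial R (n + 1) (k + 1)) =
      ((n : R) + 1) • (b k - b (k + 1)) := fun k => by
    rw [bernsteinPolynomial.derivative_succ, Polynomial.smul_eq_C_mul]; simp [b]
  have hb0 : derivative (bernsteinPolynomial R (n + 1) 0) = -(((n : R) + 1) • b 0) := by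
    rw [bernsteinPolynomial.derivative_zero, Polynomial.smul_eq_C_mul]; simp [b]; ring
  have hshift : ∑ k ∈ Finset.range (n + 1), c k • b k =
      ∑ k ∈ Finset.range (n + 1), c (k + 1) • b (k + 1) + c 0 • b 0 := by
    have htop : b (n + 1) = 0 := bernsteinPolynomial.eq_zero_of_lt R n.lt_succ_self
    rw [Finset.sum_range_succ', Finset.sum_range_succ (fun k => c (k + 1) • b (k + 1)), htop,
      smul_zero, add_zero]
  simp only [bernsteinSum, Polynomial.derivative_sum, Polynomial.derivative_smul, fwdDiff, sub_smul,
    Finset.sum_sub_distrib]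
  rw [Finset.sum_range_succ' _ (n + 1), hshift, hb0]
  simp only [hb, smul_sub, Finset.sum_sub_distrib, ← Finset.smul_sum, smul_comm (c _)]
  module

theorem iterate_derivative_bernsteinSum_two {R : Type*} [CommRing R] (n : ℕ) (c : ℕ → R) :
    derivative^[2] (bernsteinSum (n + 2) c) =
      (((n : R) + 2) * ((n : R) + 1)) • bernsteinSum n ((Δ_[1])^[2] c) := by
  simp only [Function.iterate_succ, Function.iterate_zero, Function.comp_apply, id]
  rw [derivative_bernsteinSum_succ, Polynomial.derivative_smul, derivative_bernsteinSum_succ,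
    smul_smul]
  push_cast
  ring_nf

theorem abs_eval_bernsteinSum_le {n : ℕ} {c : ℕ → ℝ} {K x : ℝ} (hx : x ∈ Icc 0 1)
    (hc : ∀ k ≤ n, |c k| ≤ K) : |(bernsteinSum n c).eval x| ≤ K := by
  have hb : ∀ k, 0 ≤ (bernsteinPolynomial ℝ n k).eval x := fun _ =>
    bernstein_nonneg (x := ⟨x, hx⟩)
  calc |(bernsteinSum n c).eval x|
      ≤ ∑ k ∈ Finset.range (n + 1), |c k| * (bernsteinPolynomial ℝ n k).eval x := by
        simp only [bernsteinSum, Polynomial.eval_finsetSum, Polynomial.eval_smul, smul_eq_mul]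
        refine (Finset.abs_sum_le_sum_abs _ _).trans_eq (Finset.sum_congr rfl fun k _ => ?_)
        rw [abs_mul, abs_of_nonneg (hb k)]
    _ ≤ ∑ k ∈ Finset.range (n + 1), K * (bernsteinPolynomial ℝ n k).eval x :=
        Finset.sum_le_sum fun k hk =>
          mul_le_mul_of_nonneg_right (hc k (Nat.lt_succ_iff.1 (Finset.mem_range.1 hk))) (hb k)
    _ = K := by
        rw [← Finset.mul_sum, ← Polynomial.eval_finsetSum, bernsteinPolynomial.sum,
          Polynomial.eval_one, mul_one]

end BernsteinSum

theorem supNorm_nonneg (g : ℝ → ℝ) : 0 ≤ supNorm g :=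
  Real.sSup_nonneg fun _ ⟨_, _, hy⟩ => hy ▸ abs_nonneg _

theorem abs_le_supNorm {g : ℝ → ℝ} (hg : ContinuousOn g (Icc 0 1)) {x : ℝ} (hx : x ∈ Icc 0 1) :
    |g x| ≤ supNorm g :=
  le_csSup (isCompact_Icc.image_of_continuousOn hg.abs).bddAbove ⟨x, hx, rfl⟩

theorem supNorm_le {g : ℝ → ℝ} {K : ℝ} (hK : ∀ x ∈ Icc 0 1, |g x| ≤ K) : supNorm g ≤ K :=
  csSup_le ((nonempty_Icc.2 zero_le_one).image _) fun _ ⟨x, hx, hy⟩ => hy ▸ hK x hx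

theorem omega2_le {f : ℝ → ℝ} {t K : ℝ} (hK : 0 ≤ K)
    (hf : ∀ x h, 0 < h → h ≤ t → 0 ≤ x → x + 2 * h ≤ 1 → |(Δ_[h])^[2] f x| ≤ K) :
    omega2 f t ≤ K := by
  refine Real.sSup_le ?_ hK
  rintro _ ⟨x, h, hh, hht, hx, hxh, rfl⟩
  simpa [fwdDiff_iter_two_apply, two_mul] using hf x h hh hht hx hxh

section BernsteinPoly

def bernsteinPoly (n : ℕ) (f : ℝ → ℝ) : ℝ[X] :=
  bernsteinSum n fun k => f (k / n)

theorem eval_bernsteinPoly (n : ℕ) (f : ℝ → ℝ) (x : ℝ) :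
    (bernsteinPoly n f).eval x = bernsteinOp n f x := by
  simp only [bernsteinPoly, bernsteinSum, bernsteinOp, bernsteinPolynomial,
    Polynomial.eval_finsetSum, Polynomial.eval_smul, Polynomial.eval_mul, Polynomial.eval_natCast,
    Polynomial.eval_pow, Polynomial.eval_X, Polynomial.eval_sub, Polynomial.eval_one, smul_eq_mul]
  exact Finset.sum_congr rfl fun k _ => by ring

variable {n : ℕ} {f : ℝ → ℝ}

theorem abs_sub_eval_bernsteinPoly_le (hf : ContinuousOn f (Icc 0 1)) {x : ℝ}
    (hx : x ∈ Icc 0 1) :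
    |f x - (bernsteinPoly n f).eval x| ≤ supNorm (fun y => bernsteinOp n f y - f y) := by
  rw [abs_sub_comm, eval_bernsteinPoly]
  refine abs_le_supNorm ?_ hx (g := fun y => bernsteinOp n f y - f y)
  exact ((bernsteinPoly n f).continuousOn.sub hf).congr fun y _ => by simp [eval_bernsteinPoly]

theorem supNorm_iterate_derivative_bernsteinPoly_le (hn : 2 ≤ n)
    (hf : ContinuousOn f (Icc 0 1)) :
    supNorm (fun x => (derivative^[2] (bernsteinPoly n f)).eval x) ≤
      4 * (n : ℝ) ^ 3 * supNorm (fun y => bernsteinOp n f y - f y) := by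
  obtain ⟨m, rfl⟩ : ∃ m, n = m + 2 := ⟨n - 2, by omega⟩
  set N : ℝ := ((m + 2 : ℕ) : ℝ)
  set M := supNorm (fun x => (derivative^[2] (bernsteinPoly (m + 2) f)).eval x)
  set D := supNorm (fun y => bernsteinOp (m + 2) f y - f y)
  have hN : 2 ≤ N := by simp [N]
  have hgrid : ∀ k ≤ m,
      |(Δ_[1])^[2] (fun j : ℕ => f (j / N)) k| ≤ M * (1 / N) ^ 2 + 4 * D := by
    intro k hk
    have hkN : (k : ℝ) + 2 ≤ N := by simp [N]; exact_mod_cast hk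
    have hI : Icc ((k : ℝ) / N) (k / N + 2 * (1 / N)) ⊆ Icc 0 1 := by
      refine Icc_subset_Icc (by positivity) ?_
      calc (k : ℝ) / N + 2 * (1 / N) = (k + 2) / N := by ring
        _ ≤ 1 := (div_le_one (by positivity)).2 hkN
    rw [fwdDiff_iter_two_comp_div]
    exact abs_fwdDiff_iter_two_le_of_polynomial_approx (by positivity)
      (fun y hy => abs_le_supNorm (Polynomial.continuousOn _) (hI hy))
      (fun y hy => abs_sub_eval_bernsteinPoly_le hf (hI hy))
  have hM : M ≤ N * (N - 1) * (M * (1 / N) ^ 2 + 4 * D) := supNorm_le fun y hy => by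
    have hcoef : ((m : ℝ) + 2) * ((m : ℝ) + 1) = N * (N - 1) := by
      simp only [N, Nat.cast_add, Nat.cast_ofNat]; ring
    rw [bernsteinPoly, iterate_derivative_bernsteinSum_two, Polynomial.eval_smul, smul_eq_mul,
      abs_mul, hcoef, abs_of_nonneg (by nlinarith)]
    exact mul_le_mul_of_nonneg_left (abs_eval_bernsteinSum_le hy hgrid) (by nlinarith)
  have hMN : M / N ≤ 4 * N * (N - 1) * D := by
    have : N * (N - 1) * (M * (1 / N) ^ 2 + 4 * D) = M - M / N + 4 * N * (N - 1) * D := by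
      field_simp
    linarith
  have hD : 0 ≤ D := supNorm_nonneg _
  calc M = N * (M / N) := by field_simp
    _ ≤ N * (4 * N * (N - 1) * D) := by gcongr
    _ ≤ 4 * N ^ 3 * D := by nlinarith [mul_nonneg (sq_nonneg N) hD]

end BernsteinPoly

theorem bernstein_lower_estimate_general (n : ℕ) (hn : 2 < n) (f : ℝ → ℝ) (hf : Continuous f)
    (t : ℝ) :
    omega2 f t ≤ 4 * (1 + (n : ℝ) ^ 3 * t ^ 2) * supNorm (fun x => bernsteinOp n f x - f x) ∧
      (1 / 8) * omega2 f ((n : ℝ) ^ (-(3 : ℝ) / 2)) ≤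
        supNorm (fun x => bernsteinOp n f x - f x) := by
  set D := supNorm (fun x => bernsteinOp n f x - f x)
  have hD : 0 ≤ D := supNorm_nonneg _
  have hM := supNorm_iterate_derivative_bernsteinPoly_le hn.le hf.continuousOn
  have hω : ∀ s : ℝ, omega2 f s ≤ 4 * (1 + (n : ℝ) ^ 3 * s ^ 2) * D := fun s =>
    omega2_le (by positivity) fun x h hh hhs hx hxh => by
      have hI : Icc x (x + 2 * h) ⊆ Icc 0 1 := Icc_subset_Icc hx hxh
      calc |(Δ_[h])^[2] f x| ≤ 4 * (n : ℝ) ^ 3 * D * h ^ 2 + 4 * D :=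
            abs_fwdDiff_iter_two_le_of_polynomial_approx hh.le
              (fun y hy => (abs_le_supNorm (Polynomial.continuousOn _) (hI hy)).trans hM)
              (fun y hy => abs_sub_eval_bernsteinPoly_le hf.continuousOn (hI hy))
        _ ≤ 4 * (n : ℝ) ^ 3 * D * s ^ 2 + 4 * D := by gcongr
        _ = 4 * (1 + (n : ℝ) ^ 3 * s ^ 2) * D := by ring
  refine ⟨hω t, ?_⟩
  have hscale : (n : ℝ) ^ 3 * ((n : ℝ) ^ (-(3 : ℝ) / 2)) ^ 2 = 1 := by
    have hn0 : (0 : ℝ) < n := by positivity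
    rw [← Real.rpow_natCast, ← Real.rpow_natCast, ← Real.rpow_mul hn0.le, ← Real.rpow_add hn0]
    norm_num
  have := hω ((n : ℝ) ^ (-(3 : ℝ) / 2))
  rw [hscale] at this
  linarith

/-- **Lower estimate for the Bernstein operator.**
For all `f ∈ C([0,1])` and `t > 0`:
`ω₂(f,t) ≤ 4 (1 + n³ t²) ‖B_n f − f‖_∞`; in particular
`(1/8) ω₂(f, n^{−3/2}) ≤ ‖B_n f − f‖_∞`. -/
theorem bernstein_lower_estimate (n : ℕ) (hn : 2 < n) (f : ℝ → ℝ) (hf : Continuous f)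
    (t : ℝ) (ht : 0 < t) :
    omega2 f t ≤ 4 * (1 + (n : ℝ) ^ 3 * t ^ 2) * supNorm (fun x => bernsteinOp n f x - f x) ∧
      (1 / 8) * omega2 f ((n : ℝ) ^ (-(3 : ℝ) / 2)) ≤
        supNorm (fun x => bernsteinOp n f x - f x) :=
  bernstein_lower_estimate_general n hn f hf t

end
end

section
/- The fixed point space of the Kantorovič operator K_n is the span of the constant function 1: ker(K_n − I) = span{1}. -/
/-!
`K_n f x` is a convex combination, with the Bernstein weights `b_{n,k}(x)`, of the means of `f`
over the cells `[k/(n+1), (k+1)/(n+1)]`. If `K_n f = f` and `f` attains its maximum `M` at `x`,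
every cell with `b_{n,k}(x) > 0` must have mean `M`, so `f ≡ M` on it by continuity. Some cell
carries positive weight at the maximum point, and it contains a point of `(0,1)`, where all
Bernstein weights are positive; so `f ≡ M` on every cell, and the cells cover `[0,1]`.
-/

noncomputable section

def kantorovichOp (n : ℕ) (f : ℝ → ℝ) (x : ℝ) : ℝ :=
  (n + 1 : ℝ) * ∑ k ∈ Finset.range (n + 1), (n.choose k : ℝ) * x ^ k * (1 - x) ^ (n - k) *
    ∫ u in ((k : ℝ) / (n + 1))..((k + 1 : ℝ) / (n + 1)), f u

open Set Polynomial

theorem Finset.eq_of_sum_mul_eq_of_le {R ι : Type*} [CommRing R] [LinearOrder R]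
    [IsStrictOrderedRing R] {s : Finset ι} {w a : ι → R} {M : R}
    (hw : ∀ i ∈ s, 0 ≤ w i) (hw₁ : ∑ i ∈ s, w i = 1) (ha : ∀ i ∈ s, a i ≤ M)
    (h : ∑ i ∈ s, w i * a i = M) {i : ι} (hi : i ∈ s) (hwi : 0 < w i) : a i = M := by
  have hsum : ∑ j ∈ s, w j * (M - a j) = 0 := by
    simp only [mul_sub, Finset.sum_sub_distrib, ← Finset.sum_mul, hw₁, one_mul, h, sub_self]
  have hterm := (Finset.sum_eq_zero_iff_of_nonneg fun j hj ↦
    mul_nonneg (hw j hj) (sub_nonneg.2 (ha j hj))).1 hsum i hi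
  linarith [(mul_eq_zero.1 hterm).resolve_left hwi.ne']

theorem intervalIntegral.eqOn_Icc_of_integral_eq_of_le {f : ℝ → ℝ} {a b M : ℝ} (hab : a < b)
    (hf : ContinuousOn f (Icc a b)) (hle : ∀ x ∈ Icc a b, f x ≤ M)
    (h : ∫ x in a..b, f x = (b - a) * M) : ∀ x ∈ Icc a b, f x = M := by
  intro x hx
  by_contra hne
  have hlt := integral_lt_integral_of_continuousOn_of_le_of_exists_lt hab hf continuousOn_const
    (fun y hy ↦ hle y (Ioc_subset_Icc_self hy)) ⟨x, hx, (hle x hx).lt_of_ne hne⟩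
  rw [integral_const, smul_eq_mul, ← h] at hlt
  exact hlt.false

namespace bernsteinPolynomial

theorem eval_eq (n k : ℕ) (x : ℝ) :
    (bernsteinPolynomial ℝ n k).eval x = (n.choose k : ℝ) * x ^ k * (1 - x) ^ (n - k) := by
  simp [bernsteinPolynomial]

theorem sum_eval (n : ℕ) (x : ℝ) :
    ∑ k ∈ Finset.range (n + 1), (bernsteinPolynomial ℝ n k).eval x = 1 := by
  rw [← eval_finsetSum, bernsteinPolynomial.sum, eval_one]

theorem eval_nonneg (n k : ℕ) {x : ℝ} (hx : x ∈ Icc 0 1) :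
    0 ≤ (bernsteinPolynomial ℝ n k).eval x := by
  obtain ⟨hx₀, hx₁⟩ := hx
  have : 0 ≤ 1 - x := sub_nonneg.2 hx₁
  rw [eval_eq]
  positivity

theorem eval_pos {n k : ℕ} (hk : k ≤ n) {x : ℝ} (hx : x ∈ Ioo 0 1) :
    0 < (bernsteinPolynomial ℝ n k).eval x := by
  obtain ⟨hx₀, hx₁⟩ := hx
  have : 0 < 1 - x := sub_pos.2 hx₁
  have : 0 < (n.choose k : ℝ) := by exact_mod_cast n.choose_pos hk
  rw [eval_eq]
  positivity

theorem exists_eval_pos (n : ℕ) (x : ℝ) :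
    ∃ k ≤ n, 0 < (bernsteinPolynomial ℝ n k).eval x := by
  obtain ⟨k, hk, hpos⟩ := Finset.exists_lt_of_sum_lt (s := Finset.range (n + 1))
    (f := fun _ ↦ (0 : ℝ)) (g := fun k ↦ (bernsteinPolynomial ℝ n k).eval x)
    (by simp only [sum_eval, Finset.sum_const_zero, zero_lt_one])
  exact ⟨k, Finset.mem_range_succ_iff.1 hk, hpos⟩

end bernsteinPolynomial

def kantorovichCell (n k : ℕ) : Set ℝ :=
  Icc ((k : ℝ) / (n + 1)) ((k + 1 : ℝ) / (n + 1))

section kantorovichCell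

variable {n k : ℕ}

theorem kantorovichCell_length :
    (k + 1 : ℝ) / (n + 1) - k / (n + 1) = 1 / (n + 1) := by
  ring

theorem kantorovichCell_subset (hk : k ≤ n) : kantorovichCell n k ⊆ Icc 0 1 := by
  refine Icc_subset_Icc (by positivity) ((div_le_one (by positivity)).2 ?_)
  exact_mod_cast Nat.succ_le_succ hk

theorem exists_mem_kantorovichCell (n : ℕ) {y : ℝ} (hy : y ∈ Icc 0 1) :
    ∃ k ≤ n, y ∈ kantorovichCell n k := by
  have hn : (0 : ℝ) < n + 1 := by positivity
  refine ⟨min n ⌊y * (n + 1)⌋₊, min_le_left _ _, ?_, ?_⟩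
  · rw [div_le_iff₀ hn]
    calc ((min n ⌊y * (n + 1)⌋₊ : ℕ) : ℝ) ≤ ⌊y * (n + 1)⌋₊ := by
          exact_mod_cast min_le_right _ _
      _ ≤ y * (n + 1) := Nat.floor_le (by have := hy.1; positivity)
  · rw [le_div_iff₀ hn]
    rcases le_total n ⌊y * (n + 1)⌋₊ with h | h
    · rw [min_eq_left h]
      nlinarith [hy.2]
    · rw [min_eq_right h]
      exact_mod_cast (Nat.lt_floor_add_one (y * (n + 1))).le

theorem exists_mem_kantorovichCell_mem_Ioo (hk : k ≤ n) :
    ∃ z ∈ kantorovichCell n k, z ∈ Ioo 0 1 := by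
  have hn : (0 : ℝ) < n + 1 := by positivity
  have hkn : (k : ℝ) + 1 / 2 < n + 1 := by
    have : (k : ℝ) ≤ n := by exact_mod_cast hk
    linarith
  refine ⟨(k + 1 / 2) / (n + 1), ⟨?_, ?_⟩, by positivity, (div_lt_one hn).2 hkn⟩ <;>
    gcongr <;> linarith

end kantorovichCell

def kantorovichMean (n : ℕ) (f : ℝ → ℝ) (k : ℕ) : ℝ :=
  (n + 1) * ∫ u in ((k : ℝ) / (n + 1))..((k + 1 : ℝ) / (n + 1)), f u

section kantorovichOp

variable {n k : ℕ} {f : ℝ → ℝ}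

theorem kantorovichOp_eq_sum (n : ℕ) (f : ℝ → ℝ) (x : ℝ) :
    kantorovichOp n f x = ∑ k ∈ Finset.range (n + 1),
      (bernsteinPolynomial ℝ n k).eval x * kantorovichMean n f k := by
  rw [kantorovichOp, Finset.mul_sum]
  refine Finset.sum_congr rfl fun k _ ↦ ?_
  rw [bernsteinPolynomial.eval_eq, kantorovichMean]
  ring

theorem kantorovichMean_eq_of_eqOn {c : ℝ} (hc : ∀ y ∈ Icc (0 : ℝ) 1, f y = c)
    (hk : k ≤ n) : kantorovichMean n f k = c := by
  rw [kantorovichMean, intervalIntegral.integral_congr (g := fun _ ↦ c),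
    intervalIntegral.integral_const, smul_eq_mul, kantorovichCell_length]
  · field_simp
  · intro u hu
    rw [uIcc_of_le (by gcongr; linarith)] at hu
    exact hc u (kantorovichCell_subset hk hu)

theorem kantorovichOp_eq_of_eqOn {c : ℝ} (hc : ∀ y ∈ Icc (0 : ℝ) 1, f y = c) (x : ℝ) :
    kantorovichOp n f x = c := by
  rw [kantorovichOp_eq_sum, Finset.sum_congr rfl fun k hk ↦ by
    rw [kantorovichMean_eq_of_eqOn hc (Finset.mem_range_succ_iff.1 hk)],
    ← Finset.sum_mul, bernsteinPolynomial.sum_eval, one_mul]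

variable {M : ℝ}

theorem kantorovichMean_le (hf : ContinuousOn f (Icc 0 1)) (hM : ∀ y ∈ Icc 0 1, f y ≤ M)
    (hk : k ≤ n) : kantorovichMean n f k ≤ M := by
  have hcell := kantorovichCell_subset hk
  have hint := intervalIntegral.integral_mono_on (μ := MeasureTheory.volume)
    (by gcongr; linarith) ((hf.mono hcell).intervalIntegrable_of_Icc (by gcongr; linarith))
    intervalIntegrable_const fun y hy ↦ hM y (hcell hy)
  rw [intervalIntegral.integral_const, smul_eq_mul, kantorovichCell_length] at hint
  calc kantorovichMean n f k ≤ (n + 1) * (1 / (n + 1) * M) := by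
        rw [kantorovichMean]; gcongr
    _ = M := by field_simp

theorem eqOn_kantorovichCell_of_mean_eq (hf : ContinuousOn f (Icc 0 1))
    (hM : ∀ y ∈ Icc 0 1, f y ≤ M) (hk : k ≤ n) (h : kantorovichMean n f k = M) :
    ∀ y ∈ kantorovichCell n k, f y = M := by
  have hcell := kantorovichCell_subset hk
  refine intervalIntegral.eqOn_Icc_of_integral_eq_of_le (by gcongr; linarith) (hf.mono hcell)
    (fun y hy ↦ hM y (hcell hy)) ?_
  rw [kantorovichCell_length, ← h, kantorovichMean]
  field_simp

theorem eqOn_kantorovichCell_of_fixed_of_eq_max {x : ℝ} (hf : ContinuousOn f (Icc 0 1))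
    (hK : ∀ y ∈ Icc (0 : ℝ) 1, kantorovichOp n f y = f y) (hM : ∀ y ∈ Icc 0 1, f y ≤ M)
    (hx : x ∈ Icc 0 1) (hfx : f x = M) (hk : k ≤ n)
    (hpos : 0 < (bernsteinPolynomial ℝ n k).eval x) :
    ∀ y ∈ kantorovichCell n k, f y = M := by
  refine eqOn_kantorovichCell_of_mean_eq hf hM hk <|
    Finset.eq_of_sum_mul_eq_of_le (fun j _ ↦ bernsteinPolynomial.eval_nonneg n j hx)
      (bernsteinPolynomial.sum_eval n x)
      (fun j hj ↦ kantorovichMean_le hf hM (Finset.mem_range_succ_iff.1 hj)) ?_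
      (Finset.mem_range_succ_iff.2 hk) hpos
  rw [← kantorovichOp_eq_sum, hK x hx, hfx]

end kantorovichOp

/-- **Fixed points of the Kantorovič operator.**
A continuous `f` on `[0,1]` satisfies `K_n f = f` (on `[0,1]`) if and only if `f` is constant
on `[0,1]`, i.e. `ker (K_n − I) = span {1}`. -/
theorem kantorovich_fixed_points (n : ℕ) (f : ℝ → ℝ) (hf : Continuous f) :
    (∀ x ∈ Set.Icc (0 : ℝ) 1, kantorovichOp n f x = f x) ↔
      ∃ c : ℝ, ∀ x ∈ Set.Icc (0 : ℝ) 1, f x = c := by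
  refine ⟨fun hK ↦ ?_, fun ⟨c, hc⟩ x hx ↦ by rw [kantorovichOp_eq_of_eqOn hc, hc x hx]⟩
  obtain ⟨x₀, hx₀, hmax⟩ := isCompact_Icc.exists_isMaxOn (nonempty_Icc.2 zero_le_one)
    hf.continuousOn
  have hM : ∀ y ∈ Icc 0 1, f y ≤ f x₀ := fun y hy ↦ hmax hy
  obtain ⟨k, hk, hpos⟩ := bernsteinPolynomial.exists_eval_pos n x₀
  obtain ⟨z, hzk, hz⟩ := exists_mem_kantorovichCell_mem_Ioo hk
  have hfz : f z = f x₀ :=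
    eqOn_kantorovichCell_of_fixed_of_eq_max hf.continuousOn hK hM hx₀ rfl hk hpos z hzk
  refine ⟨f x₀, fun y hy ↦ ?_⟩
  obtain ⟨j, hj, hyj⟩ := exists_mem_kantorovichCell n hy
  exact eqOn_kantorovichCell_of_fixed_of_eq_max hf.continuousOn hK hM (Ioo_subset_Icc_self hz)
    hfz hj (bernsteinPolynomial.eval_pos hj hz) y hyj

end
end
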